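/- If G is a minimum counterexample, then there is no cut vertex v of G together with a block B of G of order 10 such that v belongs to B and v is the only cut vertex of G contained in B. -/

import Mathlib

/-!
Every vertex of `B` other than `v` is not a cut vertex, so all its neighbours lie in `B`, while `v`,
being a cut vertex, has a neighbour outside `B`. Deleting `B \ {v}` therefore leaves a connected
graph `H` on `n - 9` vertices in which `v` has degree at most 3; so `H` is not `C₅²`, has no
isolated vertices, and minimality gives `9 ν_s(H) ≥ n - 9`. A double count inside `B` finds an edge
of `B` with no end in `N[v]`; it has no neighbour in `H` and extends every induced matching of `H`,
whence `9 ν_s(G) ≥ 9 ν_s(H) + 9 ≥ n`.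
-/

open SimpleGraph

universe u

/-- The graph obtained from a 5-cycle by blowing up each vertex into an
independent set of size 2: parts indexed by `ZMod 5`, consecutive parts
completely joined. -/
def C5Sq : SimpleGraph (ZMod 5 × Fin 2) :=
  SimpleGraph.fromRel (fun a b => a.1 = b.1 + 1)

/-- `M` is an induced matching of `G`: a set of edges of `G` such that no two
edges of `M` share an endpoint and no edge of `G` joins endpoints of two
distinct edges of `M`. -/
def IsInducedMatching {V : Type*} (G : SimpleGraph V) (M : Finset (Sym2 V)) : Prop :=
  (M : Set (Sym2 V)) ⊆ G.edgeSet ∧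
    ∀ e ∈ M, ∀ f ∈ M, e ≠ f → ∀ a ∈ e, ∀ b ∈ f, a ≠ b ∧ ¬ G.Adj a b

/-- The strong (induced) matching number of `G`. -/
noncomputable def strongMatchingNumber {V : Type*} (G : SimpleGraph V) : ℕ :=
  sSup {k | ∃ M : Finset (Sym2 V), IsInducedMatching G M ∧ M.card = k}

/-- The degree of a vertex. -/
noncomputable def deg {V : Type*} (G : SimpleGraph V) (v : V) : ℕ :=
  (G.neighborSet v).ncard

/-- The number of isolated vertices of `G`. -/
noncomputable def numIsolated {V : Type*} (G : SimpleGraph V) : ℕ :=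
  {v : V | ∀ w, ¬ G.Adj v w}.ncard

/-- The number of connected components of `G` isomorphic to `C5Sq`. -/
noncomputable def numC5SqComponents {V : Type*} (G : SimpleGraph V) : ℕ :=
  {c : G.ConnectedComponent | Nonempty (G.induce c.supp ≃g C5Sq)}.ncard

/-- `G` is a minimum counterexample: connected, maximum degree at most 4,
no isolated vertices, not isomorphic to `C5Sq`, with `9·ν_s(G) < n(G)`,
while every graph of smaller order and maximum degree at most 4 satisfies
`9·ν_s(H) ≥ n(H) − i(H) − n₅(H)`. -/
def MinCounterexample {V : Type u} [Fintype V] (G : SimpleGraph V) : Prop :=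
  G.Connected ∧ (∀ v, deg G v ≤ 4) ∧ (∀ v, ∃ w, G.Adj v w) ∧
    IsEmpty (G ≃g C5Sq) ∧
    9 * strongMatchingNumber G < Fintype.card V ∧
    ∀ (W : Type u) [Fintype W] (H : SimpleGraph W),
      Fintype.card W < Fintype.card V → (∀ w, deg H w ≤ 4) →
      (Fintype.card W : ℤ) - numIsolated H - numC5SqComponents H ≤
        9 * strongMatchingNumber H

/-- `v` is a cut vertex of `G`: removing `v` increases the number of
connected components. -/
def IsCutVertex {V : Type u} [Fintype V] (G : SimpleGraph V) (v : V) : Prop :=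
  Nat.card G.ConnectedComponent <
    Nat.card (G.induce ({v}ᶜ : Set V)).ConnectedComponent

/-- The induced subgraph on `B` is 2-connected: it has at least 3 vertices,
is connected, and removing any single vertex keeps it connected. -/
def TwoConnectedOn {V : Type u} (G : SimpleGraph V) (B : Set V) : Prop :=
  3 ≤ B.ncard ∧ (G.induce B).Connected ∧
    ∀ x ∈ B, (G.induce (B \ {x})).Connected

/-- `B` is a block of `G`: a maximal 2-connected (induced) subgraph. -/
def IsBlock {V : Type u} (G : SimpleGraph V) (B : Set V) : Prop :=
  TwoConnectedOn G B ∧ ∀ B' : Set V, B ⊆ B' → TwoConnectedOn G B' → B' = B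


namespace SimpleGraph

variable {V : Type*} {G : SimpleGraph V}

lemma preconnected_iff_subsingleton_connectedComponent :
    G.Preconnected ↔ Subsingleton G.ConnectedComponent :=
  ⟨Preconnected.subsingleton_connectedComponent,
    fun _ _ _ => ConnectedComponent.eq.mp (Subsingleton.elim _ _)⟩

lemma Preconnected.eq_univ_of_adj_mem (hG : G.Preconnected) {S : Set V} (hS : S.Nonempty)
    (hclosed : ∀ x ∈ S, ∀ y, G.Adj x y → y ∈ S) : S = Set.univ := by
  obtain ⟨x, hx⟩ := hS
  refine Set.eq_univ_of_forall fun y => by_contra fun hy => ?_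
  obtain ⟨p⟩ := hG x y
  obtain ⟨d, -, hd, hd'⟩ := p.exists_boundary_dart S hx hy
  exact hd' (hclosed _ hd _ d.adj)

lemma isCutVertex_iff_not_preconnected [Fintype V] (hG : G.Connected) (v : V) :
    IsCutVertex G v ↔ ¬ (G.induce {v}ᶜ).Preconnected := by
  have hone : Nat.card G.ConnectedComponent = 1 :=
    Nat.card_eq_one_iff_unique.mpr ⟨hG.preconnected.subsingleton_connectedComponent,
      ⟨G.connectedComponentMk hG.nonempty.some⟩⟩
  rw [IsCutVertex, hone, preconnected_iff_subsingleton_connectedComponent,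
    ← Finite.card_le_one_iff_subsingleton, not_le]

lemma Walk.IsPath.exists_walk_avoiding [DecidableEq V] {a c : V} {p : G.Walk a c}
    (hp : p.IsPath) {x y : V} (hy : y ∈ p.support) (hxy : x ≠ y) :
    (∃ q : G.Walk a y, x ∉ q.support ∧ q.support ⊆ p.support) ∨
      ∃ q : G.Walk c y, x ∉ q.support ∧ q.support ⊆ p.support := by
  by_cases hx : x ∈ (p.takeUntil y hy).support
  · refine Or.inr ⟨(p.dropUntil y hy).reverse, fun hx' => ?_,
      by simpa using p.support_dropUntil_subset_support hy⟩
    rw [Walk.support_reverse, List.mem_reverse, ← Walk.cons_tail_support, List.mem_cons] at hx'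
    have hnodup := hp.support_nodup
    rw [← p.take_spec hy, Walk.support_append, List.nodup_append] at hnodup
    exact hnodup.2.2 x hx x (hx'.resolve_left hxy) rfl
  · exact Or.inl ⟨_, hx, p.support_takeUntil_subset_support hy⟩

end SimpleGraph

namespace TwoConnectedOn

variable {V : Type*} {G : SimpleGraph V} {B : Set V}

lemma connected_diff (hB : TwoConnectedOn G B) (x : V) : (G.induce (B \ {x})).Connected := by
  by_cases hx : x ∈ B
  · exact hB.2.2 x hx
  · rw [Set.sdiff_singleton_eq_self hx]
    exact hB.2.1

/-- After deleting a vertex `x`, each remaining vertex of the path reaches an end of the path other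
than `x` along the path; the interior of the path may meet `B`. -/
lemma union_support (hB : TwoConnectedOn G B) {a c : V} {p : G.Walk a c} (hp : p.IsPath)
    (ha : a ∈ B) (hc : c ∈ B) : TwoConnectedOn G (B ∪ {z | z ∈ p.support}) := by
  classical
  have hfin : (B ∪ {z | z ∈ p.support}).Finite :=
    (Set.finite_of_ncard_pos (by have := hB.1; omega)).union p.support.finite_toSet
  refine ⟨hB.1.trans (Set.ncard_le_ncard Set.subset_union_left hfin),
    induce_union_connected hB.2.1.preconnected p.connected_induce_support.preconnected
      ⟨a, ha, p.start_mem_support⟩, fun x _ => ?_⟩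
  obtain ⟨⟨u, hu⟩⟩ := (hB.connected_diff x).nonempty
  refine induce_connected_of_patches u ⟨Or.inl hu.1, hu.2⟩ fun {y} hy => ?_
  rcases hy with ⟨hyB | hyp, hyx⟩
  · exact ⟨B \ {x}, fun z hz => ⟨Or.inl hz.1, hz.2⟩, hu, ⟨hyB, hyx⟩,
      (hB.connected_diff x).preconnected _ _⟩
  obtain ⟨e, he, q, hxq, hqp⟩ :
      ∃ e ∈ B, ∃ q : G.Walk e y, x ∉ q.support ∧ q.support ⊆ p.support :=
    (hp.exists_walk_avoiding hyp (Ne.symm hyx)).elim (fun h => ⟨a, ha, h⟩) fun h => ⟨c, hc, h⟩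
  have hconn : (G.induce (B \ {x} ∪ {z | z ∈ q.support})).Connected :=
    induce_union_connected (hB.connected_diff x).preconnected
      q.connected_induce_support.preconnected
      ⟨e, ⟨he, fun h => hxq (h ▸ q.start_mem_support)⟩, q.start_mem_support⟩
  refine ⟨_, ?_, Or.inl hu, Or.inr q.end_mem_support, hconn.preconnected _ _⟩
  rintro z (hz | hz)
  · exact ⟨Or.inl hz.1, hz.2⟩
  · exact ⟨Or.inr (hqp hz), fun h => hxq (h ▸ hz)⟩

lemma exists_adj_ne (hB : TwoConnectedOn G B) {u : V} (hu : u ∈ B) :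
    ∃ z₁ ∈ B, ∃ z₂ ∈ B, z₁ ≠ z₂ ∧ G.Adj u z₁ ∧ G.Adj u z₂ := by
  have hfin : B.Finite := Set.finite_of_ncard_pos (by have := hB.1; omega)
  have := hfin.to_subtype
  have : Nontrivial B := (Set.one_lt_ncard_iff_nontrivial.mp (by have := hB.1; omega)).coe_sort
  obtain ⟨⟨z₁, hz₁⟩, hadj₁⟩ := hB.2.1.preconnected.exists_adj_of_nontrivial ⟨u, hu⟩
  have : Finite ↥(B \ {z₁}) := hfin.sdiff.to_subtype
  have : Nontrivial ↥(B \ {z₁}) := (Set.one_lt_ncard_iff_nontrivial.mp (by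
    rw [Set.ncard_sdiff_singleton_of_mem hz₁]; have := hB.1; omega)).coe_sort
  obtain ⟨⟨z₂, hz₂⟩, hadj₂⟩ := (hB.connected_diff z₁).preconnected.exists_adj_of_nontrivial
    ⟨u, hu, fun h => hadj₁.ne (Subtype.ext h)⟩
  exact ⟨z₁, hz₁, z₂, hz₂.1, Ne.symm hz₂.2, hadj₁, hadj₂⟩

end TwoConnectedOn

/-- Otherwise a path from `w` back to `B` avoiding `b` would extend the block. -/
lemma IsBlock.mem_of_adj {V : Type*} {G : SimpleGraph V} {B : Set V} (hB : IsBlock G B)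
    {b w : V} (hb : b ∈ B) (hconn : (G.induce {b}ᶜ).Preconnected) (hbw : G.Adj b w) : w ∈ B := by
  classical
  obtain ⟨c, hc, hcb⟩ := Set.exists_ne_of_one_lt_ncard (s := B) (by have := hB.1.1; omega) b
  obtain ⟨q⟩ := hconn ⟨w, hbw.ne'⟩ ⟨c, hcb⟩
  set r : G.Walk w c := (q.map (Embedding.induce _).toHom).bypass
  have hbr : b ∉ r.support := fun h => by
    obtain ⟨z, -, hz⟩ := List.mem_map.mp
      (Walk.support_map _ _ ▸ (q.map _).support_bypass_subset_support h)
    exact z.2 hz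
  have hext := hB.2 _ Set.subset_union_left
    (hB.1.union_support ((Walk.bypass_isPath _).cons hbr (h := hbw)) hb hc)
  exact hext ▸ Or.inr (by simp)

section Degree

variable {V : Type*} {G : SimpleGraph V}

lemma deg_induce (s : Set V) (a : s) : deg (G.induce s) a = (G.neighborSet a ∩ s).ncard := by
  rw [deg, ← Set.ncard_image_of_injective _ Subtype.val_injective]
  congr 1
  ext z
  simp [and_comm]

lemma card_le_deg [Finite V] {x : V} {F : Finset V} (hF : (F : Set V) ⊆ G.neighborSet x) :
    F.card ≤ deg G x :=
  Set.ncard_coe_finset F ▸ Set.ncard_le_ncard hF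

lemma deg_congr {W : Type*} {H : SimpleGraph W} (e : G ≃g H) (x : V) :
    deg G x = deg H (e x) := by
  rw [deg, deg, ← Nat.card_coe_set_eq, ← Nat.card_coe_set_eq]
  exact Nat.card_congr (e.mapNeighborSet x)

instance : DecidableRel C5Sq.Adj := fun a b => decidable_of_iff' _ (SimpleGraph.fromRel_adj _ a b)

lemma deg_C5Sq (x : ZMod 5 × Fin 2) : deg C5Sq x = 4 := by
  have h : C5Sq.neighborSet x = ↑(Finset.univ.filter (C5Sq.Adj x)) := by
    ext z
    simp [SimpleGraph.mem_neighborSet]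
  rw [deg, h, Set.ncard_coe_finset]
  clear h
  revert x
  decide

lemma numC5SqComponents_eq_zero (hG : G.Connected) {x : V} (hx : deg G x ≠ 4) :
    numC5SqComponents G = 0 := by
  suffices h : ∀ c : G.ConnectedComponent, ¬ Nonempty (G.induce c.supp ≃g C5Sq) by
    simp only [numC5SqComponents, h, Set.ofPred_false, Set.ncard_empty]
  rintro c ⟨e⟩
  refine hx ?_
  have hc : c.supp = Set.univ :=
    Set.eq_univ_of_forall fun z => (hG.preconnected.subsingleton_connectedComponent).elim _ _
  rw [hc] at e
  rw [deg_congr ((induceUnivIso G).symm.trans e), deg_C5Sq]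

end Degree

section StrongMatching

variable {V : Type*} [Finite V] {G : SimpleGraph V}

lemma bddAbove_card_isInducedMatching (G : SimpleGraph V) :
    BddAbove {k | ∃ M : Finset (Sym2 V), IsInducedMatching G M ∧ M.card = k} :=
  ((Set.finite_range Finset.card).subset (by rintro _ ⟨M, -, rfl⟩; exact ⟨M, rfl⟩)).bddAbove

lemma IsInducedMatching.card_le {M : Finset (Sym2 V)} (hM : IsInducedMatching G M) :
    M.card ≤ strongMatchingNumber G :=
  le_csSup (bddAbove_card_isInducedMatching G) ⟨M, hM, rfl⟩

lemma exists_isInducedMatching_card_eq (G : SimpleGraph V) :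
    ∃ M : Finset (Sym2 V), IsInducedMatching G M ∧ M.card = strongMatchingNumber G :=
  Nat.sSup_mem (s := {k | ∃ M : Finset (Sym2 V), IsInducedMatching G M ∧ M.card = k})
    ⟨0, ∅, by simp [IsInducedMatching], rfl⟩ (bddAbove_card_isInducedMatching G)

lemma strongMatchingNumber_induce_lt {s : Set V} {x y : V} (hxy : G.Adj x y)
    (hx : ∀ z ∈ s, x ≠ z ∧ ¬ G.Adj x z) (hy : ∀ z ∈ s, y ≠ z ∧ ¬ G.Adj y z) :
    strongMatchingNumber (G.induce s) < strongMatchingNumber G := by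
  classical
  obtain ⟨M, hM, hMcard⟩ := exists_isInducedMatching_card_eq (G.induce s)
  set f : Sym2 s ↪ Sym2 V := ⟨Sym2.map Subtype.val, Sym2.map.injective Subtype.val_injective⟩
  have hfar : ∀ a ∈ s(x, y), ∀ e ∈ M, ∀ b ∈ f e, a ≠ b ∧ ¬ G.Adj a b := by
    intro a ha e _ b hb
    obtain ⟨z, -, rfl⟩ := Sym2.mem_map.mp hb
    rcases Sym2.mem_iff.mp ha with rfl | rfl
    exacts [hx z z.2, hy z z.2]
  have hnew : s(x, y) ∉ M.map f := fun h => by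
    obtain ⟨e, he, hfe⟩ := Finset.mem_map.mp h
    exact (hfar x (Sym2.mem_mk_left x y) e he x (hfe ▸ Sym2.mem_mk_left x y)).1 rfl
  have hM' : IsInducedMatching G (insert s(x, y) (M.map f)) := by
    refine ⟨?_, ?_⟩
    · simp only [Finset.coe_insert, Finset.coe_map, Set.insert_subset_iff, Set.image_subset_iff]
      refine ⟨hxy, fun e he => ?_⟩
      induction e using Sym2.ind with
      | h a b => exact hM.1 he
    · simp only [Finset.mem_insert, Finset.mem_map]
      rintro _ (rfl | ⟨e, he, rfl⟩) _ (rfl | ⟨e', he', rfl⟩) hne a ha b hb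
      · exact absurd rfl hne
      · exact hfar a ha e' he' b hb
      · exact (hfar b hb e he a ha).imp Ne.symm fun h h' => h h'.symm
      · obtain ⟨a', ha', rfl⟩ := Sym2.mem_map.mp ha
        obtain ⟨b', hb', rfl⟩ := Sym2.mem_map.mp hb
        exact (hM.2 e he e' he' (fun h => hne (h ▸ rfl)) a' ha' b' hb').imp
          (fun h h' => h (Subtype.ext h')) id
  have := hM'.card_le
  rw [Finset.card_insert_of_notMem hnew, Finset.card_map, hMcard] at this
  omega

end StrongMatching

lemma SimpleGraph.Connected.induce_compl {V : Type*} {G : SimpleGraph V} (hG : G.Connected)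
    {X : Set V} {v : V} (hv : v ∉ X) (hX : ∀ x ∈ X, ∀ w, G.Adj x w → w ∈ insert v X) :
    (G.induce Xᶜ).Connected := by
  set R : Set V := {z | ∃ hz : z ∉ X, (G.induce Xᶜ).Reachable ⟨v, hv⟩ ⟨z, hz⟩}
  have hXR : X ∪ R = Set.univ := by
    refine hG.preconnected.eq_univ_of_adj_mem ⟨v, Or.inr ⟨hv, Reachable.refl _⟩⟩ ?_
    rintro x (hx | ⟨hx, hr⟩) w hxw
    · rcases hX x hx w hxw with rfl | hw
      exacts [Or.inr ⟨hv, Reachable.refl _⟩, Or.inl hw]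
    · by_cases hw : w ∈ X
      · exact Or.inl hw
      · have hadj : (G.induce Xᶜ).Adj ⟨x, hx⟩ ⟨w, hw⟩ := hxw
        exact Or.inr ⟨hw, hr.trans hadj.reachable⟩
  refine (connected_iff_exists_forall_reachable _).2 ⟨⟨v, hv⟩, fun ⟨z, hz⟩ => ?_⟩
  obtain hzX | ⟨_, hr⟩ : z ∈ X ∪ R := hXR ▸ Set.mem_univ z
  · exact absurd hzX hz
  · exact hr

/-- Otherwise each of the at least `10 - 1 - 3 = 6` vertices of `B \ N[v]` sends its two block
neighbours into `N(v) ∩ B`, which has at most 3 vertices, each adjacent to at most 3 of them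
besides `v`; double counting gives at most `9 / 2` of them. -/
lemma exists_adj_sdiff_insert_neighborSet {V : Type*} [Finite V] {G : SimpleGraph V}
    (hdeg : ∀ u, deg G u ≤ 4) {B : Set V} (hB : 10 ≤ B.ncard)
    (hmin : ∀ u ∈ B, ∃ z₁ ∈ B, ∃ z₂ ∈ B, z₁ ≠ z₂ ∧ G.Adj u z₁ ∧ G.Adj u z₂)
    {v u : V} (hu : u ∉ B) (hvu : G.Adj v u) :
    ∃ x y, x ∈ B \ insert v (G.neighborSet v) ∧ y ∈ B \ insert v (G.neighborSet v) ∧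
      G.Adj x y := by
  classical
  have := Fintype.ofFinite V
  by_contra! hind
  set T : Finset V := {x ∈ B.toFinset | G.Adj v x}
  set S : Finset V := {x ∈ B.toFinset | x ∉ insert v (G.neighborSet v)}
  have hT : T.card ≤ 3 := by
    have := card_le_deg (F := insert u T) (x := v) (by
      simp only [Finset.coe_insert, Set.insert_subset_iff, T, Finset.coe_filter]
      exact ⟨hvu, fun x hx => hx.2⟩)
    rw [Finset.card_insert_of_notMem (by simp [T, hu])] at this
    linarith [hdeg v]
  have hBST : B.toFinset.card ≤ T.card + S.card + 1 := by
    have hsub : B.toFinset ⊆ insert v (T ∪ S) := fun x hx => by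
      by_cases hxv : x = v
      · simp [hxv]
      · by_cases hvx : G.Adj v x <;> simp [T, S, hx, hxv, hvx]
    have := (Finset.card_le_card hsub).trans (Finset.card_insert_le _ _)
    linarith [Finset.card_union_le T S]
  have hST : S.card * 2 ≤ T.card * 3 := by
    refine Finset.card_mul_le_card_mul G.Adj (fun s hs => ?_) fun t ht => ?_
    · obtain ⟨hsB, hsv⟩ : s ∈ B ∧ s ∉ insert v (G.neighborSet v) := by simpa [S] using hs
      obtain ⟨z₁, hz₁, z₂, hz₂, hz, hsz₁, hsz₂⟩ := hmin s hsB
      have hzT : ∀ z ∈ B, G.Adj s z → z ∈ T.bipartiteAbove G.Adj s := fun z hz hsz => by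
        have hzN : z ∈ insert v (G.neighborSet v) :=
          by_contra fun h => hind s z ⟨hsB, hsv⟩ ⟨hz, h⟩ hsz
        rcases hzN with rfl | hvz
        · exact absurd (Or.inr hsz.symm) hsv
        · simp [Finset.bipartiteAbove, T, hz, hsz, show G.Adj v z from hvz]
      calc 2 = ({z₁, z₂} : Finset V).card := (Finset.card_pair hz).symm
        _ ≤ _ := Finset.card_le_card
          (by simp [Finset.insert_subset_iff, hzT, hz₁, hz₂, hsz₁, hsz₂])
    · have hvt : G.Adj v t := (by simpa [T] using ht : t ∈ B ∧ G.Adj v t).2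
      have := card_le_deg (F := insert v (S.bipartiteBelow G.Adj t)) (x := t) (by
        simp only [Finset.coe_insert, Set.insert_subset_iff, Finset.bipartiteBelow, S,
          Finset.coe_filter]
        exact ⟨hvt.symm, fun x hx => hx.2.symm⟩)
      rw [Finset.card_insert_of_notMem (by simp [Finset.bipartiteBelow, S])] at this
      linarith [hdeg t]
  rw [Set.ncard_eq_toFinset_card'] at hB
  omega

namespace MinCounterexample

variable {V : Type u} [Fintype V] {G : SimpleGraph V}

lemma card_le_of_connected (hG : MinCounterexample G) {W : Type u} [Fintype W] [Nontrivial W]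
    {H : SimpleGraph W} (hlt : Fintype.card W < Fintype.card V) (hdeg : ∀ w, deg H w ≤ 4)
    (hH : H.Connected) {x : W} (hx : deg H x ≠ 4) :
    Fintype.card W ≤ 9 * strongMatchingNumber H := by
  have hiso : numIsolated H = 0 := by
    have h : {w : W | ∀ w', ¬ H.Adj w w'} = ∅ := Set.eq_empty_of_forall_notMem fun w hw =>
      (hH.preconnected.exists_adj_of_nontrivial w).elim hw
    rw [numIsolated, h, Set.ncard_empty]
  have := hG.2.2.2.2.2 W H hlt hdeg
  rw [hiso, numC5SqComponents_eq_zero hH hx] at this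
  omega

lemma false_of_pendant_block (hG : MinCounterexample G) {B : Set V} {v u : V}
    (hB : TwoConnectedOn G B) (hB10 : B.ncard = 10) (hv : v ∈ B) (hu : u ∉ B) (hvu : G.Adj v u)
    (hclosed : ∀ b ∈ B, b ≠ v → ∀ w, G.Adj b w → w ∈ B) : False := by
  classical
  have hdeg : ∀ x, deg G x ≤ 4 := hG.2.1
  set W : Set V := (B \ {v})ᶜ
  have hvW : v ∈ W := fun h => h.2 rfl
  have huW : u ∈ W := fun h => hu h.1
  have hfar : ∀ x ∈ B \ insert v (G.neighborSet v), ∀ z ∈ W, x ≠ z ∧ ¬ G.Adj x z := by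
    rintro x ⟨hxB, hxv⟩ z hz
    refine ⟨fun h => hz ⟨h ▸ hxB, fun h' => hxv (Or.inl (h.trans h'))⟩, fun hxz => hz ⟨?_, ?_⟩⟩
    · exact hclosed x hxB (fun h => hxv (Or.inl h)) z hxz
    · rintro rfl
      exact hxv (Or.inr hxz.symm)
  have hH : (G.induce W).Connected := hG.1.induce_compl (fun h => h.2 rfl) fun b hb w hbw =>
    (eq_or_ne w v).imp id fun hwv => ⟨hclosed b hb.1 hb.2 w hbw, hwv⟩
  have hdegH : ∀ w, deg (G.induce W) w ≤ 4 := fun w => by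
    rw [deg_induce]
    exact (Set.ncard_le_ncard Set.inter_subset_left).trans (hdeg w)
  have hdegv : deg (G.induce W) ⟨v, hvW⟩ ≠ 4 := by
    obtain ⟨z, hz, -, -, -, hvz, -⟩ := hB.exists_adj_ne hv
    refine ne_of_lt (lt_of_lt_of_le ?_ (hdeg v))
    rw [deg_induce]
    exact Set.ncard_lt_ncard (Set.inter_ssubset_left_iff.mpr fun h => h hvz ⟨hz, hvz.ne'⟩)
  have hcard : Fintype.card W + 9 = Fintype.card V := by
    rw [← Set.toFinset_card, Set.toFinset_compl, Finset.card_compl,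
      ← Set.ncard_eq_toFinset_card', Set.ncard_sdiff_singleton_of_mem hv, hB10]
    have := Set.ncard_le_card B
    rw [Nat.card_eq_fintype_card] at this
    omega
  have : Nontrivial W := ⟨⟨v, hvW⟩, ⟨u, huW⟩, fun h => hvu.ne (congrArg Subtype.val h)⟩
  have hν := hG.card_le_of_connected (by omega) hdegH hH hdegv
  obtain ⟨x, y, hx, hy, hxy⟩ :=
    exists_adj_sdiff_insert_neighborSet hdeg hB10.ge (fun _ => hB.exists_adj_ne) hu hvu
  have hlt := strongMatchingNumber_induce_lt hxy (hfar x hx) (hfar y hy)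
  linarith [hG.2.2.2.2.1]

end MinCounterexample

/-- In a minimum counterexample, there is no cut vertex `v`
together with a block `B` of order 10 such that `v ∈ B` and `v` is the only
cut vertex of `G` contained in `B`. -/
theorem stmt15 {V : Type u} [Fintype V] (G : SimpleGraph V)
    (hG : MinCounterexample G) :
    ¬ ∃ (v : V) (B : Set V), IsCutVertex G v ∧ IsBlock G B ∧
      B.ncard = 10 ∧ v ∈ B ∧ ∀ w ∈ B, IsCutVertex G w → w = v := by
  rintro ⟨v, B, hcut, hB, hB10, hv, honly⟩
  have hclosed : ∀ b ∈ B, b ≠ v → ∀ w, G.Adj b w → w ∈ B := fun b hb hbv w hbw =>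
    hB.mem_of_adj hb (not_not.mp fun h =>
      hbv (honly b hb ((isCutVertex_iff_not_preconnected hG.1 b).mpr h))) hbw
  obtain ⟨u, hu, hvu⟩ : ∃ u ∉ B, G.Adj v u := by
    by_contra! hvB
    have hBuniv : B = Set.univ := hG.1.preconnected.eq_univ_of_adj_mem ⟨v, hv⟩ fun b hb w hbw => by
      rcases eq_or_ne b v with rfl | hbv
      exacts [by_contra fun hw => hvB w hw hbw, hclosed b hb hbv w hbw]
    have hconn := (hB.1.2.2 v hv).preconnected
    rw [hBuniv, ← Set.compl_eq_univ_sdiff] at hconn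
    exact (isCutVertex_iff_not_preconnected hG.1 v).mp hcut hconn
  exact hG.false_of_pendant_block hB.1 hB10 hv hu hvu hclosed
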